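/- (L^p stability of the averaging interpolant.) Let d ≥ 1, N ∈ ℕ with N ≥ 2, h = 1/N, Ω = (0,1)^d, and let Π_h be the averaging interpolant Π_h w(x) = Σ_{k ∈ {1,…,N−1}^d} W_k(w) Λ_k(x), where Λ_k(x) = Π_{i=1}^d max(0, 1 − |x_i/h − k_i|) and W_k(w) = ⨍_{hk + (−h/2, h/2)^d} w dx. Then for every p ∈ [1,∞) there is a constant C, depending only on d and p (in particular independent of h and w), such that ∫_Ω |Π_h w|^p dx ≤ C ∫_Ω |w|^p dx for all w ∈ L^p(Ω). -/

import Mathlib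

open MeasureTheory

/-- One-dimensional hat function with node `j h`: `λ_j(t) = max(0, 1 − |t/h − j|)`. -/
noncomputable def hatFn (h : ℝ) (j : ℕ) (t : ℝ) : ℝ := max 0 (1 - |t / h - (j : ℝ)|)

/-- Tensor-product hat function `Λ_k(x) = Π_i λ_{k_i}(x_i)`. -/
noncomputable def LamFn (d : ℕ) (h : ℝ) (k : Fin d → ℕ) (x : Fin d → ℝ) : ℝ :=
  ∏ i, hatFn h (k i) (x i)

/-- The open cube `h k + (−h/2, h/2)^d` centered at the node `h k`. -/
def nodeCube (d : ℕ) (h : ℝ) (k : Fin d → ℕ) : Set (Fin d → ℝ) :=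
  {x | ∀ i, |x i - h * (k i : ℝ)| < h / 2}

/-- Nodal value `W_k(w) = ⨍_{h k + (−h/2,h/2)^d} w dx`. -/
noncomputable def nodalW (d : ℕ) (h : ℝ) (k : Fin d → ℕ) (w : (Fin d → ℝ) → ℝ) : ℝ :=
  ⨍ x in nodeCube d h k, w x

/-- The averaging interpolant
`Π_h w (x) = Σ_{k ∈ {1,…,N−1}^d} W_k(w) Λ_k(x)` with `h = 1/N`. -/
noncomputable def interpQ (d N : ℕ) (w : (Fin d → ℝ) → ℝ) (x : Fin d → ℝ) : ℝ :=
  ∑ k ∈ Finset.Icc (fun _ => 1) (fun _ => N - 1),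
    nodalW d ((N : ℝ)⁻¹) k w * LamFn d ((N : ℝ)⁻¹) k x

/-- The open unit cube `Ω = (0,1)^d`. -/
def unitCube (d : ℕ) : Set (Fin d → ℝ) := {x | ∀ i, 0 < x i ∧ x i < 1}


/-!
The hat functions `Λ_k` are nonnegative with `∑ₖ Λ_k ≤ 1`, so convexity of `t ↦ t ^ p` gives
pointwise `|Π_h w| ^ p ≤ ∑ₖ Λ_k |W_k(w)| ^ p`. Each `Λ_k` is supported in the cube of side `2h`
around its node, hence `∫ Λ_k ≤ (2h) ^ d`, while Jensen's inequality for the average gives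
`|W_k(w)| ^ p ≤ h⁻ᵈ ∫_{Q_k} |w| ^ p` on the cube `Q_k` of side `h` around the node. The cubes
`Q_k` of the interior nodes are pairwise disjoint and lie in `Ω`, so summing gives `C = 2 ^ d`.
-/

open Set

theorem rpow_sum_mul_le_sum_mul_rpow_of_sum_le_one {ι : Type*} (s : Finset ι) {p : ℝ} (hp : 1 ≤ p)
    {w f : ι → ℝ} (hw : ∀ i, 0 ≤ w i) (hf : ∀ i, 0 ≤ f i) (hsum : ∑ i ∈ s, w i ≤ 1) :
    (∑ i ∈ s, w i * f i) ^ p ≤ ∑ i ∈ s, w i * f i ^ p := by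
  have hp0 : 0 < p := zero_lt_one.trans_le hp
  have hmass : (∑ i ∈ s, w i) ^ (1 - p⁻¹) ≤ 1 :=
    Real.rpow_le_one (Finset.sum_nonneg fun i _ => hw i) hsum
      (sub_nonneg.2 (inv_le_one_of_one_le₀ hp))
  have hrhs : 0 ≤ ∑ i ∈ s, w i * f i ^ p :=
    Finset.sum_nonneg fun i _ => mul_nonneg (hw i) (Real.rpow_nonneg (hf i) p)
  rw [← Real.le_rpow_inv_iff_of_pos (Finset.sum_nonneg fun i _ => mul_nonneg (hw i) (hf i))
    hrhs hp0]
  calc ∑ i ∈ s, w i * f i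
      ≤ (∑ i ∈ s, w i) ^ (1 - p⁻¹) * (∑ i ∈ s, w i * f i ^ p) ^ p⁻¹ :=
        Real.inner_le_weight_mul_Lp_of_nonneg s hp w f hw hf
    _ ≤ (∑ i ∈ s, w i * f i ^ p) ^ p⁻¹ :=
        mul_le_of_le_one_left (Real.rpow_nonneg hrhs _) hmass

theorem abs_setAverage_rpow_le {α : Type*} [MeasurableSpace α] {μ : Measure α} {s : Set α}
    (hs₀ : μ s ≠ 0) (hs : μ s ≠ ⊤) {f : α → ℝ} {p : ℝ} (hp : 1 ≤ p) (hf : IntegrableOn f s μ)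
    (hfp : IntegrableOn (fun x => |f x| ^ p) s μ) :
    |⨍ x in s, f x ∂μ| ^ p ≤ ⨍ x in s, |f x| ^ p ∂μ := by
  have habs : |⨍ x in s, f x ∂μ| ≤ ⨍ x in s, |f x| ∂μ := by
    rw [setAverage_eq, setAverage_eq, smul_eq_mul, smul_eq_mul, abs_mul,
      abs_of_nonneg (by positivity)]
    gcongr
    exact abs_integral_le_integral_abs
  calc |⨍ x in s, f x ∂μ| ^ p ≤ (⨍ x in s, |f x| ∂μ) ^ p :=
        Real.rpow_le_rpow (abs_nonneg _) habs (zero_le_one.trans hp)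
    _ ≤ ⨍ x in s, |f x| ^ p ∂μ :=
        (convexOn_rpow hp).map_set_average_le (Real.continuous_rpow_const
          (zero_le_one.trans hp)).continuousOn isClosed_Ici hs₀ hs
          (ae_of_all _ fun x => abs_nonneg (f x)) hf.abs hfp

theorem sum_setIntegral_le_setIntegral_of_pairwiseDisjoint {α ι : Type*} [MeasurableSpace α]
    {μ : Measure α} (t : Finset ι) {s : ι → Set α} {u : Set α} (hs : ∀ i ∈ t, MeasurableSet (s i))
    (hdisj : (t : Set ι).PairwiseDisjoint s) (hsu : ∀ i ∈ t, s i ⊆ u) {f : α → ℝ}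
    (hf₀ : ∀ x, 0 ≤ f x) (hf : IntegrableOn f u μ) :
    ∑ i ∈ t, ∫ x in s i, f x ∂μ ≤ ∫ x in u, f x ∂μ := by
  rw [← integral_biUnion_finset t hs hdisj fun i hi => hf.mono_set (hsu i hi)]
  exact setIntegral_mono_set hf (ae_of_all _ hf₀) (iUnion₂_subset hsu).eventuallyLE

theorem hatFn_nonneg (h : ℝ) (j : ℕ) (t : ℝ) : 0 ≤ hatFn h j t := le_max_left _ _

theorem hatFn_le_one (h : ℝ) (j : ℕ) (t : ℝ) : hatFn h j t ≤ 1 :=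
  max_le zero_le_one (sub_le_self _ (abs_nonneg _))

theorem abs_sub_lt_one_of_hatFn_ne_zero {h : ℝ} {j : ℕ} {t : ℝ} (hne : hatFn h j t ≠ 0) :
    |t / h - j| < 1 := by
  by_contra! hge
  exact hne (max_eq_left (by linarith))

theorem hatFn_add_hatFn_succ_le_one (h : ℝ) (j : ℕ) (t : ℝ) :
    hatFn h j t + hatFn h (j + 1) t ≤ 1 := by
  have htri : 1 ≤ |t / h - j| + |t / h - (j + 1 : ℕ)| := by
    simpa using abs_sub (t / h - j) (t / h - (j + 1 : ℕ))
  unfold hatFn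
  rcases max_cases 0 (1 - |t / h - j|) with ⟨h₁, -⟩ | ⟨h₁, -⟩ <;>
    rcases max_cases 0 (1 - |t / h - (j + 1 : ℕ)|) with ⟨h₂, -⟩ | ⟨h₂, -⟩ <;>
    linarith [abs_nonneg (t / h - j), abs_nonneg (t / h - (j + 1 : ℕ))]

-- Only the two nodes `⌊t / h⌋` and `⌊t / h⌋ + 1` can carry a nonzero hat at `t`.
theorem sum_hatFn_le_one (h : ℝ) (S : Finset ℕ) (t : ℝ) : ∑ j ∈ S, hatFn h j t ≤ 1 := by
  set a := ⌊t / h⌋.toNat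
  have hsupp : ∀ j ∈ S, hatFn h j t ≠ 0 → j ∈ ({a, a + 1} : Finset ℕ) := by
    intro j _ hj
    obtain ⟨hlo, hhi⟩ := abs_lt.1 (abs_sub_lt_one_of_hatFn_ne_zero hj)
    have h₁ : ⌊t / h⌋ - 1 < (j : ℤ) := by
      exact_mod_cast (by linarith [Int.floor_le (t / h)] : (⌊t / h⌋ : ℝ) - 1 < j)
    have h₂ : (j : ℤ) < ⌊t / h⌋ + 2 := by
      exact_mod_cast (by linarith [Int.lt_floor_add_one (t / h)] : (j : ℝ) < ⌊t / h⌋ + 2)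
    simp only [Finset.mem_insert, Finset.mem_singleton]
    omega
  calc ∑ j ∈ S, hatFn h j t = ∑ j ∈ S with j ∈ ({a, a + 1} : Finset ℕ), hatFn h j t :=
        (Finset.sum_filter_of_ne hsupp).symm
    _ ≤ ∑ j ∈ ({a, a + 1} : Finset ℕ), hatFn h j t :=
        Finset.sum_le_sum_of_subset_of_nonneg (fun j hj => (Finset.mem_filter.1 hj).2)
          fun j _ _ => hatFn_nonneg h j t
    _ = hatFn h a t + hatFn h (a + 1) t := Finset.sum_pair (by omega)
    _ ≤ 1 := hatFn_add_hatFn_succ_le_one h a t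

section NodalBasis

open Metric

variable {d : ℕ} {h : ℝ}

theorem LamFn_nonneg (k : Fin d → ℕ) (x : Fin d → ℝ) : 0 ≤ LamFn d h k x :=
  Finset.prod_nonneg fun _ _ => hatFn_nonneg _ _ _

theorem LamFn_le_one (k : Fin d → ℕ) (x : Fin d → ℝ) : LamFn d h k x ≤ 1 :=
  Finset.prod_le_one (fun _ _ => hatFn_nonneg _ _ _) fun _ _ => hatFn_le_one _ _ _

theorem continuous_LamFn (k : Fin d → ℕ) : Continuous (LamFn d h k) := by
  unfold LamFn hatFn
  fun_prop

theorem sum_LamFn_le_one (a b : ℕ) (x : Fin d → ℝ) :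
    ∑ k ∈ Finset.Icc (fun _ => a) (fun _ => b), LamFn d h k x ≤ 1 := by
  rw [Pi.Icc_eq]
  calc ∑ k ∈ Fintype.piFinset (fun _ => Finset.Icc a b), LamFn d h k x
      = ∏ i, ∑ j ∈ Finset.Icc a b, hatFn h j (x i) :=
        (Finset.prod_univ_sum (fun _ => Finset.Icc a b) fun i j => hatFn h j (x i)).symm
    _ ≤ 1 := Finset.prod_le_one (fun _ _ => Finset.sum_nonneg fun _ _ => hatFn_nonneg _ _ _)
        fun _ _ => sum_hatFn_le_one _ _ _

theorem nodeCube_eq_ball (hh : 0 < h) (k : Fin d → ℕ) :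
    nodeCube d h k = ball (fun i => h * k i) (h / 2) := by
  ext x
  simp [nodeCube, mem_ball, dist_pi_lt_iff (half_pos hh), Real.dist_eq]

theorem measurableSet_nodeCube (hh : 0 < h) (k : Fin d → ℕ) : MeasurableSet (nodeCube d h k) :=
  nodeCube_eq_ball hh k ▸ measurableSet_ball

theorem volume_nodeCube_pos (hh : 0 < h) (k : Fin d → ℕ) : 0 < volume (nodeCube d h k) :=
  nodeCube_eq_ball hh k ▸ measure_ball_pos _ _ (half_pos hh)

theorem volume_nodeCube_lt_top (hh : 0 < h) (k : Fin d → ℕ) : volume (nodeCube d h k) < ⊤ :=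
  nodeCube_eq_ball hh k ▸ measure_ball_lt_top

theorem volume_real_nodeCube (hh : 0 < h) (k : Fin d → ℕ) :
    volume.real (nodeCube d h k) = h ^ d := by
  rw [measureReal_def, nodeCube_eq_ball hh, Real.volume_pi_ball _ (half_pos hh),
    ENNReal.toReal_ofReal (by positivity), Fintype.card_fin]
  ring

theorem nodeCube_disjoint (hh : 0 < h) {k k' : Fin d → ℕ} (hkk : k ≠ k') :
    Disjoint (nodeCube d h k) (nodeCube d h k') := by
  obtain ⟨i, hi⟩ := Function.ne_iff.1 hkk
  have hki : (1 : ℝ) ≤ |(k i : ℝ) - k' i| := by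
    exact_mod_cast Int.one_le_abs (sub_ne_zero.2 (by exact_mod_cast hi : (k i : ℤ) ≠ k' i))
  rw [nodeCube_eq_ball hh, nodeCube_eq_ball hh]
  apply ball_disjoint_ball
  calc h / 2 + h / 2 = h * 1 := by ring
    _ ≤ h * |(k i : ℝ) - k' i| := by gcongr
    _ = dist (h * k i) (h * k' i) := by rw [Real.dist_eq, ← mul_sub, abs_mul, abs_of_pos hh]
    _ ≤ dist (fun i => h * k i) (fun i => h * k' i) :=
        dist_le_pi_dist (fun j => h * (k j : ℝ)) (fun j => h * (k' j : ℝ)) i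

theorem mem_ball_of_LamFn_ne_zero (hh : 0 < h) {k : Fin d → ℕ} {x : Fin d → ℝ}
    (hx : LamFn d h k x ≠ 0) : x ∈ ball (fun i => h * k i) h := by
  rw [mem_ball, dist_pi_lt_iff hh]
  intro i
  have hi := abs_sub_lt_one_of_hatFn_ne_zero (Finset.prod_ne_zero_iff.1 hx i (Finset.mem_univ i))
  have hscale : x i - h * k i = h * (x i / h - k i) := by field_simp
  calc dist (x i) (h * k i) = h * |x i / h - k i| := by
        rw [Real.dist_eq, hscale, abs_mul, abs_of_pos hh]
    _ < h := mul_lt_of_lt_one_right hh hi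

theorem LamFn_le_indicator_ball (hh : 0 < h) (k : Fin d → ℕ) (x : Fin d → ℝ) :
    LamFn d h k x ≤ (ball (fun i => h * k i) h).indicator 1 x := by
  by_cases hx : LamFn d h k x = 0
  · exact hx ▸ indicator_nonneg (fun _ _ => zero_le_one) x
  · rw [indicator_of_mem (mem_ball_of_LamFn_ne_zero hh hx)]
    exact LamFn_le_one k x

theorem integrable_indicator_one_ball (c : Fin d → ℝ) (r : ℝ) :
    Integrable ((ball c r).indicator (1 : (Fin d → ℝ) → ℝ)) :=
  (integrable_indicator_iff measurableSet_ball).2 (integrableOn_const measure_ball_lt_top.ne)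

theorem integrable_LamFn (hh : 0 < h) (k : Fin d → ℕ) : Integrable (LamFn d h k) := by
  refine (integrable_indicator_one_ball (fun i => h * k i) h).mono'
    (continuous_LamFn k).aestronglyMeasurable (ae_of_all _ fun x => ?_)
  rw [Real.norm_eq_abs, abs_of_nonneg (LamFn_nonneg k x)]
  exact LamFn_le_indicator_ball hh k x

theorem integral_LamFn_le (hh : 0 < h) (k : Fin d → ℕ) : ∫ x, LamFn d h k x ≤ (2 * h) ^ d := by
  calc ∫ x, LamFn d h k x ≤ ∫ x, (ball (fun i => h * k i) h).indicator 1 x :=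
        integral_mono (integrable_LamFn hh k) (integrable_indicator_one_ball _ h)
          (LamFn_le_indicator_ball hh k)
    _ = (2 * h) ^ d := by
        rw [integral_indicator_one measurableSet_ball, measureReal_def, Real.volume_pi_ball _ hh,
          ENNReal.toReal_ofReal (by positivity), Fintype.card_fin]

theorem setIntegral_LamFn_mul_abs_nodalW_rpow_le {p : ℝ} (hh : 0 < h) (hp : 1 ≤ p)
    (u : Set (Fin d → ℝ)) (k : Fin d → ℕ) {w : (Fin d → ℝ) → ℝ}
    (hw : IntegrableOn w (nodeCube d h k))
    (hwp : IntegrableOn (fun x => |w x| ^ p) (nodeCube d h k)) :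
    (∫ x in u, LamFn d h k x) * |nodalW d h k w| ^ p ≤
      2 ^ d * ∫ x in nodeCube d h k, |w x| ^ p := by
  have hLam : ∫ x in u, LamFn d h k x ≤ (2 * h) ^ d :=
    (setIntegral_le_integral (integrable_LamFn hh k) (ae_of_all _ (LamFn_nonneg k))).trans
      (integral_LamFn_le hh k)
  have hW : |nodalW d h k w| ^ p ≤ (h ^ d)⁻¹ * ∫ x in nodeCube d h k, |w x| ^ p := by
    calc |nodalW d h k w| ^ p ≤ ⨍ x in nodeCube d h k, |w x| ^ p :=
          abs_setAverage_rpow_le (volume_nodeCube_pos hh k).ne' (volume_nodeCube_lt_top hh k).ne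
            hp hw hwp
      _ = (h ^ d)⁻¹ * ∫ x in nodeCube d h k, |w x| ^ p := by
          rw [setAverage_eq, smul_eq_mul, volume_real_nodeCube hh k]
  calc (∫ x in u, LamFn d h k x) * |nodalW d h k w| ^ p
      ≤ (2 * h) ^ d * ((h ^ d)⁻¹ * ∫ x in nodeCube d h k, |w x| ^ p) :=
        mul_le_mul hLam hW (by positivity) (by positivity)
    _ = 2 ^ d * ∫ x in nodeCube d h k, |w x| ^ p := by
        rw [mul_pow]
        field_simp

end NodalBasis

theorem unitCube_eq_ball (d : ℕ) : unitCube d = Metric.ball (fun _ => 1 / 2) (1 / 2) := by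
  ext x
  simp only [unitCube, mem_ofPred_eq, Metric.mem_ball,
    dist_pi_lt_iff (one_half_pos : (0 : ℝ) < 1 / 2), Real.dist_eq, abs_lt]
  refine forall_congr' fun i => ?_
  constructor <;> rintro ⟨h₁, h₂⟩ <;> constructor <;> linarith

section Interpolant

variable {d N : ℕ}

theorem abs_interpQ_rpow_le {p : ℝ} (hp : 1 ≤ p) (w : (Fin d → ℝ) → ℝ) (x : Fin d → ℝ) :
    |interpQ d N w x| ^ p ≤
      ∑ k ∈ Finset.Icc (fun _ => 1) (fun _ => N - 1),
        LamFn d (N : ℝ)⁻¹ k x * |nodalW d (N : ℝ)⁻¹ k w| ^ p := by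
  have htri : |interpQ d N w x| ≤ ∑ k ∈ Finset.Icc (fun _ => 1) (fun _ => N - 1),
      LamFn d (N : ℝ)⁻¹ k x * |nodalW d (N : ℝ)⁻¹ k w| := by
    refine (Finset.abs_sum_le_sum_abs _ _).trans_eq (Finset.sum_congr rfl fun k _ => ?_)
    rw [abs_mul, abs_of_nonneg (LamFn_nonneg k x), mul_comm]
  exact (Real.rpow_le_rpow (abs_nonneg _) htri (zero_le_one.trans hp)).trans
    (rpow_sum_mul_le_sum_mul_rpow_of_sum_le_one _ hp (LamFn_nonneg · x) (fun _ => abs_nonneg _)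
      (sum_LamFn_le_one 1 (N - 1) x))

theorem setIntegral_abs_interpQ_rpow_le (hN : 0 < N) {p : ℝ} (hp : 1 ≤ p) (u : Set (Fin d → ℝ))
    (w : (Fin d → ℝ) → ℝ) :
    ∫ x in u, |interpQ d N w x| ^ p ≤
      ∑ k ∈ Finset.Icc (fun _ => 1) (fun _ => N - 1),
        (∫ x in u, LamFn d (N : ℝ)⁻¹ k x) * |nodalW d (N : ℝ)⁻¹ k w| ^ p := by
  have hint : ∀ k, Integrable (fun x => LamFn d (N : ℝ)⁻¹ k x * |nodalW d (N : ℝ)⁻¹ k w| ^ p)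
      (volume.restrict u) :=
    fun k => ((integrable_LamFn (by positivity) k).integrableOn).mul_const _
  calc ∫ x in u, |interpQ d N w x| ^ p
      ≤ ∫ x in u, ∑ k ∈ Finset.Icc (fun _ => 1) (fun _ => N - 1),
          LamFn d (N : ℝ)⁻¹ k x * |nodalW d (N : ℝ)⁻¹ k w| ^ p :=
        integral_mono_of_nonneg (ae_of_all _ fun x => by positivity)
          (integrable_finsetSum _ fun k _ => hint k) (ae_of_all _ (abs_interpQ_rpow_le hp w))
    _ = _ := by
        rw [integral_finsetSum _ fun k _ => hint k]
        exact Finset.sum_congr rfl fun k _ => integral_mul_const _ _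

theorem nodeCube_subset_unitCube {k : Fin d → ℕ}
    (hk : k ∈ Finset.Icc (fun _ => 1) (fun _ => N - 1)) : nodeCube d (N : ℝ)⁻¹ k ⊆ unitCube d := by
  intro x hx i
  have hk₁ : 1 ≤ k i := (Finset.mem_Icc.1 hk).1 i
  have hk₂ : k i ≤ N - 1 := (Finset.mem_Icc.1 hk).2 i
  have hlo_k : (1 : ℝ) ≤ k i := by exact_mod_cast hk₁
  have hhi_k : (k i : ℝ) + 1 ≤ N := by exact_mod_cast (by omega : k i + 1 ≤ N)
  have hN : (0 : ℝ) < N := by linarith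
  have hNinv : (N : ℝ)⁻¹ * N = 1 := inv_mul_cancel₀ hN.ne'
  obtain ⟨hlo, hhi⟩ := abs_lt.1 (hx i)
  constructor <;> nlinarith [inv_pos.2 hN]

end Interpolant

theorem statement13_general (d : ℕ) (p : ℝ) (hp : 1 ≤ p) :
    ∃ Cst : ℝ, 0 < Cst ∧
      ∀ (N : ℕ), 2 ≤ N →
        ∀ w : (Fin d → ℝ) → ℝ,
          MemLp w (ENNReal.ofReal p) (volume.restrict (unitCube d)) →
          (∫ x in unitCube d, |interpQ d N w x| ^ p) ≤
            Cst * ∫ x in unitCube d, |w x| ^ p := by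
  refine ⟨2 ^ d, by positivity, fun N hN w hw => ?_⟩
  have hh : (0 : ℝ) < (N : ℝ)⁻¹ := by positivity
  have : IsFiniteMeasure (volume.restrict (unitCube d)) :=
    isFiniteMeasure_restrict.2 (unitCube_eq_ball d ▸ measure_ball_lt_top.ne)
  have hw₁ : IntegrableOn w (unitCube d) := hw.integrable (ENNReal.one_le_ofReal.2 hp)
  have hwp : IntegrableOn (fun x => |w x| ^ p) (unitCube d) := by
    unfold IntegrableOn
    simpa [ENNReal.toReal_ofReal (zero_le_one.trans hp)] using
      hw.integrable_norm_rpow (ENNReal.ofReal_pos.2 (by linarith)).ne' ENNReal.ofReal_ne_top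
  calc ∫ x in unitCube d, |interpQ d N w x| ^ p
      ≤ ∑ k ∈ Finset.Icc (fun _ => 1) (fun _ => N - 1),
          (∫ x in unitCube d, LamFn d (N : ℝ)⁻¹ k x) * |nodalW d (N : ℝ)⁻¹ k w| ^ p :=
        setIntegral_abs_interpQ_rpow_le (by omega) hp _ w
    _ ≤ ∑ k ∈ Finset.Icc (fun _ => 1) (fun _ => N - 1),
          2 ^ d * ∫ x in nodeCube d (N : ℝ)⁻¹ k, |w x| ^ p :=
        Finset.sum_le_sum fun k hk => setIntegral_LamFn_mul_abs_nodalW_rpow_le hh hp _ k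
          (hw₁.mono_set (nodeCube_subset_unitCube hk)) (hwp.mono_set (nodeCube_subset_unitCube hk))
    _ ≤ 2 ^ d * ∫ x in unitCube d, |w x| ^ p := by
        rw [← Finset.mul_sum]
        gcongr
        exact sum_setIntegral_le_setIntegral_of_pairwiseDisjoint _
          (fun k _ => measurableSet_nodeCube hh k) (fun k _ k' _ => nodeCube_disjoint hh)
          (fun k hk => nodeCube_subset_unitCube hk) (fun x => by positivity) hwp

/-- `L^p` stability of the averaging interpolant: for `p ∈ [1,∞)`
there is `C = C(d, p)`, independent of `h = 1/N` and `w`, with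
`∫_Ω |Π_h w|^p ≤ C ∫_Ω |w|^p`. -/
theorem statement13 (d : ℕ) (hd : 1 ≤ d) (p : ℝ) (hp : 1 ≤ p) :
    ∃ Cst : ℝ, 0 < Cst ∧
      ∀ (N : ℕ), 2 ≤ N →
        ∀ w : (Fin d → ℝ) → ℝ,
          MemLp w (ENNReal.ofReal p) (volume.restrict (unitCube d)) →
          (∫ x in unitCube d, |interpQ d N w x| ^ p) ≤
            Cst * ∫ x in unitCube d, |w x| ^ p :=
  statement13_general d p hp
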